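/- arXiv:2406.05966 — 5 statements merged into one kernel-verified Lean document; each statement's English description precedes it below -/
import Mathlib

section
/- Let P be an n×n positive definite real matrix, Q an m×m positive definite real matrix, and A an m×n real matrix. Then A P Aᵀ + Q and P⁻¹ + Aᵀ Q⁻¹ A are positive definite (hence invertible), and P Aᵀ (A P Aᵀ + Q)⁻¹ = (P⁻¹ + Aᵀ Q⁻¹ A)⁻¹ Aᵀ Q⁻¹. -/
open Matrix

theorem stmt_3 {n m : ℕ}
    (P : Matrix (Fin n) (Fin n) ℝ) (hP : P.PosDef)
    (Q : Matrix (Fin m) (Fin m) ℝ) (hQ : Q.PosDef)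
    (A : Matrix (Fin m) (Fin n) ℝ) :
    (A * P * Aᵀ + Q).PosDef ∧ (P⁻¹ + Aᵀ * Q⁻¹ * A).PosDef ∧
      P * Aᵀ * (A * P * Aᵀ + Q)⁻¹ = (P⁻¹ + Aᵀ * Q⁻¹ * A)⁻¹ * Aᵀ * Q⁻¹ := by
  have h1 : (A * P * Aᵀ + Q).PosDef := by
    have := (hP.posSemidef.mul_mul_conjTranspose_same A)
    simpa [conjTranspose, (by ext x; simp : ⇑(starRingEnd ℝ) = id), Matrix.map_id] using Matrix.PosDef.posSemidef_add this hQ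
  have h2 : (P⁻¹ + Aᵀ * Q⁻¹ * A).PosDef := by
    have := (hQ.inv.posSemidef.mul_mul_conjTranspose_same Aᵀ)
    simpa [conjTranspose, mul_assoc, (by ext x; simp : ⇑(starRingEnd ℝ) = id), Matrix.map_id] using hP.inv.add_posSemidef this
  refine ⟨h1, h2, ?_⟩
  have hPdet : IsUnit P.det := isUnit_iff_ne_zero.mpr hP.det_pos.ne'
  have hQdet : IsUnit Q.det := isUnit_iff_ne_zero.mpr hQ.det_pos.ne'
  have h1det : IsUnit (A * P * Aᵀ + Q).det := isUnit_iff_ne_zero.mpr h1.det_pos.ne'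
  have h2det : IsUnit (P⁻¹ + Aᵀ * Q⁻¹ * A).det := isUnit_iff_ne_zero.mpr h2.det_pos.ne'
  have hkey : (P⁻¹ + Aᵀ * Q⁻¹ * A) * (P * Aᵀ) = Aᵀ * Q⁻¹ * (A * P * Aᵀ + Q) := by
    rw [Matrix.add_mul, ← Matrix.mul_assoc P⁻¹ P Aᵀ, Matrix.nonsing_inv_mul _ hPdet,
      Matrix.one_mul, Matrix.mul_add, Matrix.mul_assoc Aᵀ Q⁻¹ Q,
      Matrix.nonsing_inv_mul _ hQdet, Matrix.mul_one]
    simp [Matrix.mul_assoc, add_comm]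
  have := congrArg (fun M => (P⁻¹ + Aᵀ * Q⁻¹ * A)⁻¹ * M * (A * P * Aᵀ + Q)⁻¹) hkey
  simp only [← Matrix.mul_assoc] at this
  rw [Matrix.nonsing_inv_mul _ h2det, Matrix.one_mul,
    Matrix.mul_assoc ((P⁻¹ + Aᵀ * Q⁻¹ * A)⁻¹ * Aᵀ * Q⁻¹),
    Matrix.mul_nonsing_inv _ h1det, Matrix.mul_one] at this
  exact this
end

section
/- Let P and Q be n×n positive definite real matrices and A an n×n real matrix, and set L = P Aᵀ (A P Aᵀ + Q)⁻¹. Then Lᵀ P⁻¹ L + (I − A L)ᵀ Q⁻¹ (I − A L) = (Q + A P Aᵀ)⁻¹, where I denotes the n×n identity matrix. -/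
open Matrix

theorem stmt_5 {n : ℕ}
    (P Q : Matrix (Fin n) (Fin n) ℝ) (hP : P.PosDef) (hQ : Q.PosDef)
    (A : Matrix (Fin n) (Fin n) ℝ)
    (L : Matrix (Fin n) (Fin n) ℝ)
    (hL : L = P * Aᵀ * (A * P * Aᵀ + Q)⁻¹) :
    Lᵀ * P⁻¹ * L + (1 - A * L)ᵀ * Q⁻¹ * (1 - A * L) = (Q + A * P * Aᵀ)⁻¹ := by
  set S := A * P * Aᵀ + Q with hS
  have hAPA : (A * P * Aᵀ).PosSemidef := by
    have := hP.posSemidef.mul_mul_conjTranspose_same A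
    simpa using this
  have hSpd : S.PosDef := Matrix.PosDef.posSemidef_add hAPA hQ
  have hSunit : IsUnit S := hSpd.isUnit
  have hPunit : IsUnit P := hP.isUnit
  have hQunit : IsUnit Q := hQ.isUnit
  have hSS : S * S⁻¹ = 1 := mul_nonsing_inv S ((isUnit_iff_isUnit_det S).mp hSpd.isUnit)
  have hSS' : S⁻¹ * S = 1 := nonsing_inv_mul S ((isUnit_iff_isUnit_det S).mp hSpd.isUnit)
  have hPP : P * P⁻¹ = 1 := mul_nonsing_inv P ((isUnit_iff_isUnit_det P).mp hP.isUnit)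
  have hQQ : Q⁻¹ * Q = 1 := nonsing_inv_mul Q ((isUnit_iff_isUnit_det Q).mp hQ.isUnit)
  have hPt : Pᵀ = P := hP.isHermitian.eq
  have hQt : Qᵀ = Q := hQ.isHermitian.eq
  have hSt : Sᵀ = S := hSpd.isHermitian.eq
  have hSit : (S⁻¹)ᵀ = S⁻¹ := by rw [transpose_nonsing_inv, hSt]
  have hLt : Lᵀ = S⁻¹ * A * P := by
    rw [hL]
    simp [transpose_mul, hSit, hPt, Matrix.mul_assoc]
  have h1 : Lᵀ * P⁻¹ * L = S⁻¹ * (A * P * Aᵀ) * S⁻¹ := by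
    rw [hLt, hL]
    calc S⁻¹ * A * P * P⁻¹ * (P * Aᵀ * S⁻¹)
        = S⁻¹ * A * ((P * P⁻¹) * P) * Aᵀ * S⁻¹ := by
          simp only [Matrix.mul_assoc]
      _ = S⁻¹ * (A * P * Aᵀ) * S⁻¹ := by rw [hPP]; simp [Matrix.mul_assoc]
  have hAL : 1 - A * L = Q * S⁻¹ := by
    rw [hL]
    have : A * (P * Aᵀ * S⁻¹) = (A * P * Aᵀ) * S⁻¹ := by
      simp [Matrix.mul_assoc]
    rw [this, ← hSS, hS, add_mul]
    abel
  have h2 : (1 - A * L)ᵀ * Q⁻¹ * (1 - A * L) = S⁻¹ * Q * S⁻¹ := by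
    rw [hAL, transpose_mul, hSit, hQt]
    calc S⁻¹ * Q * Q⁻¹ * (Q * S⁻¹)
        = S⁻¹ * (Q * (Q⁻¹ * Q)) * S⁻¹ := by simp only [Matrix.mul_assoc]
      _ = S⁻¹ * Q * S⁻¹ := by rw [hQQ]; simp [Matrix.mul_assoc]
  rw [h1, h2]
  have : S⁻¹ * (A * P * Aᵀ) * S⁻¹ + S⁻¹ * Q * S⁻¹ = S⁻¹ * S * S⁻¹ := by
    rw [hS, mul_add, add_mul]
  rw [this, hSS', Matrix.one_mul]
  rw [show Q + A * P * Aᵀ = S from add_comm _ _]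
end

section
/- Let P and Q be n×n positive definite real matrices, A an n×n real matrix, and x̄, c, x₁ ∈ ℝⁿ. Then the function x₀ ↦ ‖x₀ − x̄‖²_{P⁻¹} + ‖x₁ − A x₀ − c‖²_{Q⁻¹} attains its minimum over ℝⁿ uniquely at x₀* = x̄ + P Aᵀ (A P Aᵀ + Q)⁻¹ (x₁ − A x̄ − c), and the minimum value equals ‖x₁ − A x̄ − c‖²_{(Q + A P Aᵀ)⁻¹}. -/
open Matrix

private lemma dot_flip {n : ℕ} (B : Matrix (Fin n) (Fin n) ℝ) (v w : Fin n → ℝ) :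
    v ⬝ᵥ (B *ᵥ w) = (Bᵀ *ᵥ v) ⬝ᵥ w := by
  rw [dotProduct_mulVec, mulVec_transpose]

theorem stmt_7 {n : ℕ}
    (P Q : Matrix (Fin n) (Fin n) ℝ) (hP : P.PosDef) (hQ : Q.PosDef)
    (A : Matrix (Fin n) (Fin n) ℝ) (xbar c x₁ : Fin n → ℝ)
    (f : (Fin n → ℝ) → ℝ)
    (hf : f = fun x₀ => (x₀ - xbar) ⬝ᵥ (P⁻¹ *ᵥ (x₀ - xbar))
      + (x₁ - A *ᵥ x₀ - c) ⬝ᵥ (Q⁻¹ *ᵥ (x₁ - A *ᵥ x₀ - c)))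
    (x₀star : Fin n → ℝ)
    (hx₀star : x₀star = xbar + (P * Aᵀ * (A * P * Aᵀ + Q)⁻¹) *ᵥ (x₁ - A *ᵥ xbar - c)) :
    (∀ x₀ : Fin n → ℝ, x₀ ≠ x₀star → f x₀star < f x₀) ∧
      f x₀star = (x₁ - A *ᵥ xbar - c) ⬝ᵥ ((Q + A * P * Aᵀ)⁻¹ *ᵥ (x₁ - A *ᵥ xbar - c)) := by
  have hPi : (P⁻¹).PosDef := hP.inv
  have hQi : (Q⁻¹).PosDef := hQ.inv
  -- symmetry facts
  have hPt : Pᵀ = P := by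
    have := hP.isHermitian.eq
    rwa [conjTranspose_eq_transpose_of_trivial] at this
  have hQt : Qᵀ = Q := by
    have := hQ.isHermitian.eq
    rwa [conjTranspose_eq_transpose_of_trivial] at this
  set d : Fin n → ℝ := x₁ - A *ᵥ xbar - c with hd
  set S : Matrix (Fin n) (Fin n) ℝ := A * P * Aᵀ + Q with hSdef
  have hAPAt : (A * P * Aᵀ).PosSemidef := by
    have := hP.posSemidef.mul_mul_conjTranspose_same A
    rwa [conjTranspose_eq_transpose_of_trivial] at this
  have hS : S.PosDef := Matrix.PosDef.posSemidef_add hAPAt hQ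
  have hSt : Sᵀ = S := by
    have := hS.isHermitian.eq
    rwa [conjTranspose_eq_transpose_of_trivial] at this
  -- invertibility
  have hPdet : IsUnit P.det := (isUnit_iff_isUnit_det _).mp hP.isUnit
  have hQdet : IsUnit Q.det := (isUnit_iff_isUnit_det _).mp hQ.isUnit
  have hSdet : IsUnit S.det := (isUnit_iff_isUnit_det _).mp hS.isUnit
  have hc1 : P⁻¹ * P = 1 := nonsing_inv_mul P hPdet
  have hc2 : Q⁻¹ * Q = 1 := nonsing_inv_mul Q hQdet
  have hc2' : Q * Q⁻¹ = 1 := mul_nonsing_inv Q hQdet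
  have hc3 : S⁻¹ * S = 1 := nonsing_inv_mul S hSdet
  have hc4 : S * S⁻¹ = 1 := mul_nonsing_inv S hSdet
  have hQit : (Q⁻¹)ᵀ = Q⁻¹ := by rw [transpose_nonsing_inv, hQt]
  have hSit : (S⁻¹)ᵀ = S⁻¹ := by rw [transpose_nonsing_inv, hSt]
  set M : Matrix (Fin n) (Fin n) ℝ := P⁻¹ + Aᵀ * Q⁻¹ * A with hMdef
  set N : Matrix (Fin n) (Fin n) ℝ := P * Aᵀ * S⁻¹ with hNdef
  have hM : M.PosDef := by
    have h2 := hQi.posSemidef.conjTranspose_mul_mul_same A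
    rw [conjTranspose_eq_transpose_of_trivial] at h2
    exact hPi.add_posSemidef h2
  have hMt : Mᵀ = M := by
    have := hM.isHermitian.eq
    rwa [conjTranspose_eq_transpose_of_trivial] at this
  -- matrix identity 1 : M * N = Aᵀ * Q⁻¹
  have id1 : M * N = Aᵀ * Q⁻¹ := by
    have h : M * (P * Aᵀ) = Aᵀ * Q⁻¹ * S := by
      rw [hMdef, hSdef, Matrix.add_mul, Matrix.mul_add]
      have e1 : P⁻¹ * (P * Aᵀ) = Aᵀ := by rw [← Matrix.mul_assoc, hc1, Matrix.one_mul]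
      have e2 : Aᵀ * Q⁻¹ * Q = Aᵀ := by rw [Matrix.mul_assoc, hc2, Matrix.mul_one]
      rw [e1, e2]
      noncomm_ring
    calc M * N = M * (P * Aᵀ) * S⁻¹ := by rw [hNdef]; noncomm_ring
      _ = Aᵀ * Q⁻¹ * S * S⁻¹ := by rw [h]
      _ = Aᵀ * Q⁻¹ := by rw [Matrix.mul_assoc, hc4, Matrix.mul_one]
  -- matrix identity 2 : Nᵀ * (Aᵀ * Q⁻¹) = Q⁻¹ - S⁻¹
  have hNt : Nᵀ = S⁻¹ * A * P := by
    rw [hNdef, Matrix.transpose_mul, Matrix.transpose_mul, hSit, hPt, transpose_transpose]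
    noncomm_ring
  have id2 : Nᵀ * (Aᵀ * Q⁻¹) = Q⁻¹ - S⁻¹ := by
    have hAPA : A * P * Aᵀ = S - Q := by rw [hSdef]; abel
    calc Nᵀ * (Aᵀ * Q⁻¹) = S⁻¹ * (A * P * Aᵀ) * Q⁻¹ := by rw [hNt]; noncomm_ring
      _ = S⁻¹ * (S - Q) * Q⁻¹ := by rw [hAPA]
      _ = Q⁻¹ - S⁻¹ := by
          rw [Matrix.mul_sub, Matrix.sub_mul, hc3, Matrix.one_mul, Matrix.mul_assoc, hc2',
            Matrix.mul_one]
  set b : Fin n → ℝ := Aᵀ *ᵥ (Q⁻¹ *ᵥ d) with hb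
  set ustar : Fin n → ℝ := N *ᵥ d with hustar
  have hxs : x₀star = xbar + ustar := hx₀star
  clear_value d S M N b ustar
  -- scalar lemmas
  have s3 : M *ᵥ ustar = b := by
    rw [hustar, mulVec_mulVec, id1, hb, mulVec_mulVec]
  have s4 : ∀ v, ustar ⬝ᵥ (M *ᵥ v) = v ⬝ᵥ b := by
    intro v
    rw [dot_flip, hMt, s3, dotProduct_comm]
  have s5 : ustar ⬝ᵥ b = d ⬝ᵥ (Q⁻¹ *ᵥ d) - d ⬝ᵥ (S⁻¹ *ᵥ d) := by
    have hbd : b = (Aᵀ * Q⁻¹) *ᵥ d := by rw [hb, mulVec_mulVec]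
    rw [hustar, dotProduct_comm, dot_flip, hbd, mulVec_mulVec, id2, sub_mulVec,
      sub_dotProduct, dotProduct_comm, dotProduct_comm (S⁻¹ *ᵥ d)]
  -- key identity
  have key : ∀ x₀ : Fin n → ℝ,
      f x₀ = (x₀ - x₀star) ⬝ᵥ (M *ᵥ (x₀ - x₀star)) + d ⬝ᵥ (S⁻¹ *ᵥ d) := by
    intro x₀
    set u : Fin n → ℝ := x₀ - xbar with hu
    have hres : x₁ - A *ᵥ x₀ - c = d - A *ᵥ u := by
      rw [hd, hu, mulVec_sub]; abel
    have hdiff : x₀ - x₀star = u - ustar := by rw [hxs, hu]; abel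
    clear_value u
    simp only [hf]
    rw [hres, hdiff]
    -- expand
    have s1 : u ⬝ᵥ (M *ᵥ u)
        = u ⬝ᵥ (P⁻¹ *ᵥ u) + (A *ᵥ u) ⬝ᵥ (Q⁻¹ *ᵥ (A *ᵥ u)) := by
      rw [hMdef, Matrix.add_mulVec, dotProduct_add]
      congr 1
      rw [← mulVec_mulVec, ← mulVec_mulVec, dot_flip, transpose_transpose]
    have s2a : (A *ᵥ u) ⬝ᵥ (Q⁻¹ *ᵥ d) = u ⬝ᵥ b := by
      rw [hb, dot_flip Aᵀ u, transpose_transpose]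
    have s2b : d ⬝ᵥ (Q⁻¹ *ᵥ (A *ᵥ u)) = u ⬝ᵥ b := by
      rw [dot_flip, hQit, dotProduct_comm, ← s2a]
    have e1 : (d - A *ᵥ u) ⬝ᵥ (Q⁻¹ *ᵥ (d - A *ᵥ u))
        = d ⬝ᵥ (Q⁻¹ *ᵥ d) - 2 * (u ⬝ᵥ b) + (A *ᵥ u) ⬝ᵥ (Q⁻¹ *ᵥ (A *ᵥ u)) := by
      rw [mulVec_sub, dotProduct_sub, sub_dotProduct, sub_dotProduct, s2b, s2a]
      ring
    have e2 : (u - ustar) ⬝ᵥ (M *ᵥ (u - ustar))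
        = u ⬝ᵥ (M *ᵥ u) - 2 * (u ⬝ᵥ b) + ustar ⬝ᵥ b := by
      rw [mulVec_sub, dotProduct_sub, sub_dotProduct, sub_dotProduct, s3, s4 u]
      ring
    rw [e1, e2, s1, s5, ← hu]; ring
  refine ⟨fun x₀ hx₀ => ?_, ?_⟩
  · have h0 : f x₀star = d ⬝ᵥ (S⁻¹ *ᵥ d) := by
      rw [key x₀star]; simp
    have hpos : 0 < (x₀ - x₀star) ⬝ᵥ (M *ᵥ (x₀ - x₀star)) := by
      have hne : x₀ - x₀star ≠ 0 := sub_ne_zero.mpr hx₀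
      simpa using hM.dotProduct_mulVec_pos hne
    rw [key x₀, h0]
    linarith
  · have h0 : f x₀star = d ⬝ᵥ (S⁻¹ *ᵥ d) := by
      rw [key x₀star]; simp
    rw [h0, hd]
    congr 2
    rw [hSdef, add_comm]
end

section
/- Let P, Q be n×n positive definite real matrices, R an m×m positive definite real matrix, C an m×n real matrix, A an n×n real matrix, and x̄, c, x₁ ∈ ℝⁿ, y, d ∈ ℝᵐ. Define P̆ = P − P Cᵀ (C P Cᵀ + R)⁻¹ C P and x̆ = x̄ + P Cᵀ (C P Cᵀ + R)⁻¹ (y − C x̄ − d). Then the minimum over x₀ ∈ ℝⁿ of ‖x₀ − x̄‖²_{P⁻¹} + ‖y − C x₀ − d‖²_{R⁻¹} + ‖x₁ − A x₀ − c‖²_{Q⁻¹} equals ‖x₁ − A x̆ − c‖²_{(Q + A P̆ Aᵀ)⁻¹} + ‖x̆ − x̄‖²_{P⁻¹} + ‖y − C x̆ − d‖²_{R⁻¹}. -/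
open Matrix

private lemma dp_symm' {p : ℕ} (N : Matrix (Fin p) (Fin p) ℝ) (hN : Nᵀ = N) (a b : Fin p → ℝ) :
    a ⬝ᵥ (N *ᵥ b) = b ⬝ᵥ (N *ᵥ a) := by
  rw [dotProduct_mulVec, ← mulVec_transpose, hN, dotProduct_comm]

private lemma mv_dp' {p q : ℕ} (B : Matrix (Fin p) (Fin q) ℝ) (x : Fin q → ℝ) (v : Fin p → ℝ) :
    (B *ᵥ x) ⬝ᵥ v = x ⬝ᵥ (Bᵀ *ᵥ v) := by
  rw [dotProduct_comm, dotProduct_mulVec, ← mulVec_transpose, dotProduct_comm]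

private lemma quad_expand' {p q : ℕ} (N : Matrix (Fin p) (Fin p) ℝ) (hN : Nᵀ = N)
    (B : Matrix (Fin p) (Fin q) ℝ) (w : Fin p → ℝ) (x : Fin q → ℝ) :
    (w - B *ᵥ x) ⬝ᵥ (N *ᵥ (w - B *ᵥ x))
      = w ⬝ᵥ (N *ᵥ w) - 2 * (((Bᵀ * N) *ᵥ w) ⬝ᵥ x) + x ⬝ᵥ ((Bᵀ * N * B) *ᵥ x) := by
  have h1 : (B *ᵥ x) ⬝ᵥ (N *ᵥ w) = ((Bᵀ * N) *ᵥ w) ⬝ᵥ x := by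
    rw [mv_dp', mulVec_mulVec, dotProduct_comm]
  have h2 : w ⬝ᵥ (N *ᵥ (B *ᵥ x)) = ((Bᵀ * N) *ᵥ w) ⬝ᵥ x := by
    rw [dp_symm' N hN, h1]
  have h3 : (B *ᵥ x) ⬝ᵥ (N *ᵥ (B *ᵥ x)) = x ⬝ᵥ ((Bᵀ * N * B) *ᵥ x) := by
    rw [mv_dp', mulVec_mulVec, mulVec_mulVec, Matrix.mul_assoc]
  simp only [mulVec_sub, dotProduct_sub, sub_dotProduct, h1, h2, h3]
  ring

theorem stmt_8 {n m : ℕ}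
    (P Q : Matrix (Fin n) (Fin n) ℝ) (hP : P.PosDef) (hQ : Q.PosDef)
    (R : Matrix (Fin m) (Fin m) ℝ) (hR : R.PosDef)
    (C : Matrix (Fin m) (Fin n) ℝ) (A : Matrix (Fin n) (Fin n) ℝ)
    (xbar c x₁ : Fin n → ℝ) (y d : Fin m → ℝ)
    (Pb : Matrix (Fin n) (Fin n) ℝ)
    (hPb : Pb = P - P * Cᵀ * (C * P * Cᵀ + R)⁻¹ * C * P)
    (xb : Fin n → ℝ)
    (hxb : xb = xbar + (P * Cᵀ * (C * P * Cᵀ + R)⁻¹) *ᵥ (y - C *ᵥ xbar - d)) :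
    IsLeast
      (Set.range (fun x₀ : Fin n → ℝ =>
        (x₀ - xbar) ⬝ᵥ (P⁻¹ *ᵥ (x₀ - xbar))
        + (y - C *ᵥ x₀ - d) ⬝ᵥ (R⁻¹ *ᵥ (y - C *ᵥ x₀ - d))
        + (x₁ - A *ᵥ x₀ - c) ⬝ᵥ (Q⁻¹ *ᵥ (x₁ - A *ᵥ x₀ - c))))
      ((x₁ - A *ᵥ xb - c) ⬝ᵥ ((Q + A * Pb * Aᵀ)⁻¹ *ᵥ (x₁ - A *ᵥ xb - c))
        + (xb - xbar) ⬝ᵥ (P⁻¹ *ᵥ (xb - xbar))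
        + (y - C *ᵥ xb - d) ⬝ᵥ (R⁻¹ *ᵥ (y - C *ᵥ xb - d))) := by
  have hPdet : IsUnit P.det := hP.det_pos.ne'.isUnit
  have hRdet : IsUnit R.det := hR.det_pos.ne'.isUnit
  have hQdet : IsUnit Q.det := hQ.det_pos.ne'.isUnit
  -- symmetry facts
  have hPt : Pᵀ = P := by
    have := hP.isHermitian; rwa [Matrix.IsHermitian, conjTranspose_eq_transpose_of_trivial] at this
  have hRt : Rᵀ = R := by
    have := hR.isHermitian; rwa [Matrix.IsHermitian, conjTranspose_eq_transpose_of_trivial] at this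
  have hQt : Qᵀ = Q := by
    have := hQ.isHermitian; rwa [Matrix.IsHermitian, conjTranspose_eq_transpose_of_trivial] at this
  have hPit : P⁻¹ᵀ = P⁻¹ := by rw [Matrix.transpose_nonsing_inv, hPt]
  have hRit : R⁻¹ᵀ = R⁻¹ := by rw [Matrix.transpose_nonsing_inv, hRt]
  have hQit : Q⁻¹ᵀ = Q⁻¹ := by rw [Matrix.transpose_nonsing_inv, hQt]
  -- T
  set T : Matrix (Fin m) (Fin m) ℝ := C * P * Cᵀ + R with hT_def
  have hCPC : (C * P * Cᵀ).PosSemidef := by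
    have := hP.posSemidef.mul_mul_conjTranspose_same C
    rwa [conjTranspose_eq_transpose_of_trivial] at this
  have hT : T.PosDef := Matrix.PosDef.posSemidef_add hCPC hR
  have hTdet : IsUnit T.det := hT.det_pos.ne'.isUnit
  -- M
  set M : Matrix (Fin n) (Fin n) ℝ := P⁻¹ + Cᵀ * R⁻¹ * C with hM_def
  have hCRC : (Cᵀ * R⁻¹ * C).PosSemidef := by
    have := hR.inv.posSemidef.conjTranspose_mul_mul_same C
    rwa [conjTranspose_eq_transpose_of_trivial] at this
  have hM : M.PosDef := hP.inv.add_posSemidef hCRC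
  have hMdet : IsUnit M.det := hM.det_pos.ne'.isUnit
  -- Woodbury
  have hPbM : Pb = M⁻¹ := by
    rw [hM_def, Matrix.add_mul_mul_inv_eq_sub _ _ _ _ (isUnit_nonsing_inv_iff.2 hP.isUnit)
      (isUnit_nonsing_inv_iff.2 hR.isUnit)]
    · rw [Matrix.nonsing_inv_nonsing_inv P hPdet, Matrix.nonsing_inv_nonsing_inv R hRdet, hPb]
      congr 2
      rw [add_comm]
    · rw [Matrix.nonsing_inv_nonsing_inv P hPdet, Matrix.nonsing_inv_nonsing_inv R hRdet,
        add_comm]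
      exact hT.isUnit
  have hPbPD : Pb.PosDef := hPbM ▸ hM.inv
  have hMPb : M * Pb = 1 := by rw [hPbM]; exact Matrix.mul_nonsing_inv M hMdet
  -- S
  set S : Matrix (Fin n) (Fin n) ℝ := Q + A * Pb * Aᵀ with hS_def
  have hAPbA : (A * Pb * Aᵀ).PosSemidef := by
    have := hPbPD.posSemidef.mul_mul_conjTranspose_same A
    rwa [conjTranspose_eq_transpose_of_trivial] at this
  have hS : S.PosDef := hQ.add_posSemidef hAPbA
  have hSdet : IsUnit S.det := hS.det_pos.ne'.isUnit
  -- H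
  set H : Matrix (Fin n) (Fin n) ℝ := M + Aᵀ * Q⁻¹ * A with hH_def
  have hAQA : (Aᵀ * Q⁻¹ * A).PosSemidef := by
    have := hQ.inv.posSemidef.conjTranspose_mul_mul_same A
    rwa [conjTranspose_eq_transpose_of_trivial] at this
  have hH : H.PosDef := hM.add_posSemidef hAQA
  have hHt : Hᵀ = H := by
    have := hH.isHermitian; rwa [Matrix.IsHermitian, conjTranspose_eq_transpose_of_trivial] at this
  -- key matrix identity M1
  have hM1 : P⁻¹ * (P * (Cᵀ * T⁻¹)) = Cᵀ * R⁻¹ - Cᵀ * (R⁻¹ * (C * (P * (Cᵀ * T⁻¹)))) := by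
    have h0 : C * P * Cᵀ = T - R := by rw [hT_def, add_sub_cancel_right]
    have h1 : Cᵀ * (R⁻¹ * (C * (P * (Cᵀ * T⁻¹)))) = Cᵀ * R⁻¹ - Cᵀ * T⁻¹ := by
      have e : Cᵀ * (R⁻¹ * (C * (P * (Cᵀ * T⁻¹)))) = Cᵀ * R⁻¹ * (C * P * Cᵀ) * T⁻¹ := by
        simp only [Matrix.mul_assoc]
      rw [e, h0, Matrix.mul_sub, Matrix.sub_mul,
        Matrix.mul_nonsing_inv_cancel_right _ _ hTdet,
        Matrix.mul_assoc Cᵀ R⁻¹ R, Matrix.nonsing_inv_mul R hRdet, Matrix.mul_one]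
    rw [h1, Matrix.nonsing_inv_mul_cancel_left _ _ hPdet, sub_sub_cancel]
  -- vectors
  set w2 : Fin m → ℝ := y - d with hw2_def
  set w3 : Fin n → ℝ := x₁ - c with hw3_def
  set v : Fin m → ℝ := y - C *ᵥ xb - d with hv_def
  set e : Fin n → ℝ := x₁ - A *ᵥ xb - c with he_def
  set u : Fin n → ℝ := (Pb * (Aᵀ * S⁻¹)) *ᵥ e with hu_def
  set xs : Fin n → ℝ := xb + u with hxs_def
  -- V1
  have hV1 : P⁻¹ *ᵥ (xb - xbar) = (Cᵀ * R⁻¹) *ᵥ v := by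
    set w0 : Fin m → ℝ := y - C *ᵥ xbar - d with hw0_def
    have hxbw : xb - xbar = (P * (Cᵀ * T⁻¹)) *ᵥ w0 := by
      rw [hxb]
      simp [Matrix.mul_assoc, hT_def]
    have hvw : v = w0 - (C * (P * (Cᵀ * T⁻¹))) *ᵥ w0 := by
      have hmv : C *ᵥ ((P * Cᵀ * T⁻¹) *ᵥ w0) = (C * (P * (Cᵀ * T⁻¹))) *ᵥ w0 := by
        rw [mulVec_mulVec, Matrix.mul_assoc]
      rw [hv_def, hxb, mulVec_add, hmv, hw0_def]
      abel
    rw [hxbw, mulVec_mulVec, hM1, hvw, sub_mulVec]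
    simp only [mulVec_mulVec, Matrix.mul_assoc, mulVec_sub]
  -- V2
  have hV2 : e - A *ᵥ u = (Q * S⁻¹) *ᵥ e := by
    have h : Q * S⁻¹ = 1 - A * (Pb * (Aᵀ * S⁻¹)) := by
      have hs : S * S⁻¹ = 1 := Matrix.mul_nonsing_inv S hSdet
      have hQ' : Q = S - A * Pb * Aᵀ := by rw [hS_def, add_sub_cancel_right]
      rw [hQ', Matrix.sub_mul, hs]
      simp only [Matrix.mul_assoc]
    rw [h, sub_mulVec, one_mulVec, hu_def, mulVec_mulVec]
  -- V3
  have hV3 : M *ᵥ u = (Aᵀ * S⁻¹) *ᵥ e := by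
    rw [hu_def, mulVec_mulVec, ← Matrix.mul_assoc, hMPb, Matrix.one_mul]
  -- Q⁻¹ applied to (Q*S⁻¹) e
  have hQS : Q⁻¹ *ᵥ ((Q * S⁻¹) *ᵥ e) = S⁻¹ *ᵥ e := by
    rw [mulVec_mulVec, ← Matrix.mul_assoc, Matrix.nonsing_inv_mul _ hQdet, Matrix.one_mul]
  -- expansion lemma
  have hE : ∀ x : Fin n → ℝ,
      (x - xbar) ⬝ᵥ (P⁻¹ *ᵥ (x - xbar))
      + (y - C *ᵥ x - d) ⬝ᵥ (R⁻¹ *ᵥ (y - C *ᵥ x - d))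
      + (x₁ - A *ᵥ x - c) ⬝ᵥ (Q⁻¹ *ᵥ (x₁ - A *ᵥ x - c))
      = (xbar ⬝ᵥ (P⁻¹ *ᵥ xbar) + w2 ⬝ᵥ (R⁻¹ *ᵥ w2) + w3 ⬝ᵥ (Q⁻¹ *ᵥ w3))
        - 2 * ((P⁻¹ *ᵥ xbar + (Cᵀ * R⁻¹) *ᵥ w2 + (Aᵀ * Q⁻¹) *ᵥ w3) ⬝ᵥ x)
        + x ⬝ᵥ (H *ᵥ x) := by
    intro x
    have e2 : y - C *ᵥ x - d = w2 - C *ᵥ x := by rw [hw2_def]; abel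
    have e3 : x₁ - A *ᵥ x - c = w3 - A *ᵥ x := by rw [hw3_def]; abel
    have t1 : (x - xbar) ⬝ᵥ (P⁻¹ *ᵥ (x - xbar))
        = (xbar - (1 : Matrix (Fin n) (Fin n) ℝ) *ᵥ x) ⬝ᵥ
          (P⁻¹ *ᵥ (xbar - (1 : Matrix (Fin n) (Fin n) ℝ) *ᵥ x)) := by
      have e1 : x - xbar = -(xbar - (1 : Matrix (Fin n) (Fin n) ℝ) *ᵥ x) := by
        rw [one_mulVec]; abel
      rw [e1, mulVec_neg, dotProduct_neg, neg_dotProduct, neg_neg]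
    rw [e2, e3, t1, quad_expand' P⁻¹ hPit 1 xbar x, quad_expand' R⁻¹ hRit C w2 x,
      quad_expand' Q⁻¹ hQit A w3 x]
    rw [hH_def, hM_def]
    simp only [transpose_one, Matrix.one_mul, Matrix.mul_one, Matrix.add_mulVec,
      dotProduct_add, add_dotProduct]
    ring
  -- H *ᵥ xs = b
  have hHxs : H *ᵥ xs = P⁻¹ *ᵥ xbar + (Cᵀ * R⁻¹) *ᵥ w2 + (Aᵀ * Q⁻¹) *ᵥ w3 := by
    have hMxb : M *ᵥ xb = P⁻¹ *ᵥ xbar + (Cᵀ * R⁻¹) *ᵥ w2 := by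
      have hP1 : P⁻¹ *ᵥ xb = P⁻¹ *ᵥ xbar + (Cᵀ * R⁻¹) *ᵥ v := by
        have h' := hV1
        rw [mulVec_sub, sub_eq_iff_eq_add] at h'
        rw [h']; abel
      have hvw2 : v + C *ᵥ xb = w2 := by rw [hv_def, hw2_def]; abel
      rw [hM_def, Matrix.add_mulVec, hP1, ← hvw2, mulVec_add]
      have : (Cᵀ * R⁻¹ * C) *ᵥ xb = (Cᵀ * R⁻¹) *ᵥ (C *ᵥ xb) := by rw [← mulVec_mulVec]
      rw [this]; abel
    have hMu : M *ᵥ u = Aᵀ *ᵥ (S⁻¹ *ᵥ e) := by rw [hV3, ← mulVec_mulVec]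
    have hAxs : (Aᵀ * Q⁻¹) *ᵥ (A *ᵥ xs) = (Aᵀ * Q⁻¹) *ᵥ w3 - Aᵀ *ᵥ (S⁻¹ *ᵥ e) := by
      have h1 : w3 - A *ᵥ xs = (Q * S⁻¹) *ᵥ e := by
        rw [hxs_def, mulVec_add, hw3_def, ← hV2, he_def]; abel
      have h2 : A *ᵥ xs = w3 - (Q * S⁻¹) *ᵥ e := by rw [← h1]; abel
      rw [h2, mulVec_sub]
      congr 1
      rw [mulVec_mulVec, ← Matrix.mul_assoc, Matrix.mul_assoc Aᵀ Q⁻¹ Q,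
        Matrix.nonsing_inv_mul Q hQdet, Matrix.mul_one, ← mulVec_mulVec]
    have hsplit : H *ᵥ xs = M *ᵥ xb + M *ᵥ u + (Aᵀ * Q⁻¹) *ᵥ (A *ᵥ xs) := by
      rw [hH_def, Matrix.add_mulVec]
      have : (Aᵀ * Q⁻¹ * A) *ᵥ xs = (Aᵀ * Q⁻¹) *ᵥ (A *ᵥ xs) := by rw [← mulVec_mulVec]
      rw [this, hxs_def, mulVec_add]
    rw [hsplit, hMxb, hMu, hAxs]; abel
  -- value at xs
  have hclaim2 :
      (xs - xbar) ⬝ᵥ (P⁻¹ *ᵥ (xs - xbar))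
      + (y - C *ᵥ xs - d) ⬝ᵥ (R⁻¹ *ᵥ (y - C *ᵥ xs - d))
      + (x₁ - A *ᵥ xs - c) ⬝ᵥ (Q⁻¹ *ᵥ (x₁ - A *ᵥ xs - c))
      = e ⬝ᵥ (S⁻¹ *ᵥ e) + (xb - xbar) ⬝ᵥ (P⁻¹ *ᵥ (xb - xbar)) + v ⬝ᵥ (R⁻¹ *ᵥ v) := by
    have hb : y - C *ᵥ xs - d = v - C *ᵥ u := by
      rw [hxs_def, mulVec_add, hv_def]; abel
    have hc2 : x₁ - A *ᵥ xs - c = e - A *ᵥ u := by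
      rw [hxs_def, mulVec_add, he_def]; abel
    obtain ⟨a, ha'⟩ : ∃ a, a = xb - xbar := ⟨_, rfl⟩
    rw [← ha']
    have hterm3 : (x₁ - A *ᵥ xs - c) ⬝ᵥ (Q⁻¹ *ᵥ (x₁ - A *ᵥ xs - c))
        = e ⬝ᵥ (S⁻¹ *ᵥ e) - (A *ᵥ u) ⬝ᵥ (S⁻¹ *ᵥ e) := by
      rw [hc2, hV2, hQS, ← hV2, sub_dotProduct]
    have ha : xs - xbar = a + u := by rw [hxs_def, ha']; abel
    have f1 : u ⬝ᵥ (P⁻¹ *ᵥ a) = (C *ᵥ u) ⬝ᵥ (R⁻¹ *ᵥ v) := by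
      rw [ha', hV1, ← mulVec_mulVec, mv_dp' C u (R⁻¹ *ᵥ v)]
    have f2 : a ⬝ᵥ (P⁻¹ *ᵥ u) = (C *ᵥ u) ⬝ᵥ (R⁻¹ *ᵥ v) := by
      rw [dp_symm' P⁻¹ hPit, f1]
    have f3 : v ⬝ᵥ (R⁻¹ *ᵥ (C *ᵥ u)) = (C *ᵥ u) ⬝ᵥ (R⁻¹ *ᵥ v) := dp_symm' R⁻¹ hRit v _
    have f4 : u ⬝ᵥ (P⁻¹ *ᵥ u) + (C *ᵥ u) ⬝ᵥ (R⁻¹ *ᵥ (C *ᵥ u)) = (A *ᵥ u) ⬝ᵥ (S⁻¹ *ᵥ e) := by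
      have g1 : (C *ᵥ u) ⬝ᵥ (R⁻¹ *ᵥ (C *ᵥ u)) = u ⬝ᵥ ((Cᵀ * R⁻¹ * C) *ᵥ u) := by
        rw [mv_dp' C u (R⁻¹ *ᵥ (C *ᵥ u)), mulVec_mulVec, mulVec_mulVec, Matrix.mul_assoc]
      have g2 : u ⬝ᵥ (P⁻¹ *ᵥ u) + u ⬝ᵥ ((Cᵀ * R⁻¹ * C) *ᵥ u) = u ⬝ᵥ (M *ᵥ u) := by
        rw [hM_def, Matrix.add_mulVec, dotProduct_add]
      have g3 : u ⬝ᵥ (M *ᵥ u) = (A *ᵥ u) ⬝ᵥ (S⁻¹ *ᵥ e) := by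
        rw [hV3, ← mulVec_mulVec, ← mv_dp' A u (S⁻¹ *ᵥ e)]
      rw [g1, g2, g3]
    rw [hterm3, ha, hb]
    simp only [dotProduct_add, add_dotProduct, dotProduct_sub, sub_dotProduct,
      mulVec_add, mulVec_sub]
    rw [f1, f2, f3]
    linarith [f4]
  constructor
  · exact ⟨xs, hclaim2⟩
  · rintro z ⟨x, rfl⟩
    have h0 : 0 ≤ (xs - x) ⬝ᵥ (H *ᵥ (xs - x)) := by
      simpa using hH.posSemidef.dotProduct_mulVec_nonneg (xs - x)
    have hexp : (xs - x) ⬝ᵥ (H *ᵥ (xs - x))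
        = xs ⬝ᵥ (H *ᵥ xs) - 2 * ((H *ᵥ xs) ⬝ᵥ x) + x ⬝ᵥ (H *ᵥ x) := by
      have := quad_expand' H hHt 1 xs x
      simpa [one_mulVec, transpose_one, Matrix.one_mul, Matrix.mul_one] using this
    have hb1 : (H *ᵥ xs) ⬝ᵥ x
        = (P⁻¹ *ᵥ xbar + (Cᵀ * R⁻¹) *ᵥ w2 + (Aᵀ * Q⁻¹) *ᵥ w3) ⬝ᵥ x := by rw [hHxs]
    have hb2 : (P⁻¹ *ᵥ xbar + (Cᵀ * R⁻¹) *ᵥ w2 + (Aᵀ * Q⁻¹) *ᵥ w3) ⬝ᵥ xs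
        = xs ⬝ᵥ (H *ᵥ xs) := by rw [← hHxs, dotProduct_comm]
    dsimp only
    rw [← hclaim2, hE xs, hE x]
    linarith [h0, hexp, hb1, hb2]
end

section
/- Let A be an n×n positive definite real matrix, B an m×m positive definite real matrix, C an m×n real matrix, and a ∈ ℝⁿ, b ∈ ℝᵐ. Then σ = a + A Cᵀ (C A Cᵀ + B)⁻¹ (b − C a) is the unique global minimizer over ℝⁿ of the function x ↦ ‖x − a‖²_{A⁻¹} + ‖C x − b‖²_{B⁻¹}, and the minimum value equals ‖σ − a‖²_{A⁻¹} + ‖C σ − b‖²_{B⁻¹}. -/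
open Matrix

private lemma quad_expand {n : ℕ} (M : Matrix (Fin n) (Fin n) ℝ) (hM : Mᵀ = M)
    (y u : Fin n → ℝ) :
    (y + u) ⬝ᵥ (M *ᵥ (y + u)) =
      y ⬝ᵥ (M *ᵥ y) + 2 * (y ⬝ᵥ (M *ᵥ u)) + u ⬝ᵥ (M *ᵥ u) := by
  have hsym : u ⬝ᵥ (M *ᵥ y) = y ⬝ᵥ (M *ᵥ u) := by
    rw [dotProduct_comm, dotProduct_mulVec, ← mulVec_transpose, hM]
  rw [mulVec_add, dotProduct_add, add_dotProduct, add_dotProduct, hsym]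
  ring

theorem stmt_11 {n m : ℕ}
    (A : Matrix (Fin n) (Fin n) ℝ) (hA : A.PosDef)
    (B : Matrix (Fin m) (Fin m) ℝ) (hB : B.PosDef)
    (C : Matrix (Fin m) (Fin n) ℝ) (a : Fin n → ℝ) (b : Fin m → ℝ)
    (σ : Fin n → ℝ)
    (hσ : σ = a + (A * Cᵀ * (C * A * Cᵀ + B)⁻¹) *ᵥ (b - C *ᵥ a))
    (f : (Fin n → ℝ) → ℝ)
    (hf : f = fun x => (x - a) ⬝ᵥ (A⁻¹ *ᵥ (x - a))
      + (C *ᵥ x - b) ⬝ᵥ (B⁻¹ *ᵥ (C *ᵥ x - b))) :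
    (∀ x : Fin n → ℝ, x ≠ σ → f σ < f x) ∧
      f σ = (σ - a) ⬝ᵥ (A⁻¹ *ᵥ (σ - a)) + (C *ᵥ σ - b) ⬝ᵥ (B⁻¹ *ᵥ (C *ᵥ σ - b)) := by
  have hAinv : (A⁻¹).PosDef := hA.inv
  have hBinv : (B⁻¹).PosDef := hB.inv
  set K : Matrix (Fin m) (Fin m) ℝ := C * A * Cᵀ + B with hKdef
  have hCACt : (C * A * Cᵀ).PosSemidef := by
    have := hA.posSemidef.mul_mul_conjTranspose_same C
    simpa using this
  have hK : K.PosDef := Matrix.PosDef.posSemidef_add hCACt hB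
  have hAunit : IsUnit A.det := isUnit_iff_ne_zero.mpr hA.det_pos.ne'
  have hBunit : IsUnit B.det := isUnit_iff_ne_zero.mpr hB.det_pos.ne'
  have hKunit : IsUnit K.det := isUnit_iff_ne_zero.mpr hK.det_pos.ne'
  set d : Fin m → ℝ := b - C *ᵥ a with hd
  set u : Fin n → ℝ := σ - a with hu
  set v : Fin m → ℝ := C *ᵥ σ - b with hv
  have hueq : u = (A * Cᵀ * K⁻¹) *ᵥ d := by
    rw [hu, hσ]; abel
  -- A⁻¹ u = (Cᵀ * K⁻¹) d
  have h1 : A⁻¹ *ᵥ u = (Cᵀ * K⁻¹) *ᵥ d := by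
    rw [hueq, mulVec_mulVec, ← Matrix.mul_assoc, ← Matrix.mul_assoc,
      Matrix.nonsing_inv_mul A hAunit, Matrix.one_mul]
  -- v = -(B * K⁻¹) d
  have h2 : v = -((B * K⁻¹) *ᵥ d) := by
    have hKK : (C * A * Cᵀ) * K⁻¹ = 1 - B * K⁻¹ := by
      have : K * K⁻¹ = 1 := Matrix.mul_nonsing_inv K hKunit
      rw [hKdef] at this
      rw [Matrix.add_mul] at this
      linear_combination (norm := noncomm_ring) this
    have : C *ᵥ σ = C *ᵥ a + (C * (A * Cᵀ * K⁻¹)) *ᵥ d := by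
      rw [hσ, mulVec_add, mulVec_mulVec]
    rw [hv, this, ← Matrix.mul_assoc, ← Matrix.mul_assoc, hKK, Matrix.sub_mulVec,
      Matrix.one_mulVec, hd]
    abel
  have h3 : B⁻¹ *ᵥ v = -(K⁻¹ *ᵥ d) := by
    rw [h2, mulVec_neg, mulVec_mulVec, ← Matrix.mul_assoc,
      Matrix.nonsing_inv_mul B hBunit, Matrix.one_mul]
  have key : A⁻¹ *ᵥ u + Cᵀ *ᵥ (B⁻¹ *ᵥ v) = 0 := by
    rw [h1, h3, mulVec_neg, mulVec_mulVec]
    abel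
  have hAsym : (A⁻¹)ᵀ = A⁻¹ := by
    have := hAinv.isHermitian
    simpa [Matrix.IsHermitian, Matrix.conjTranspose_eq_transpose_of_trivial] using this
  have hBsym : (B⁻¹)ᵀ = B⁻¹ := by
    have := hBinv.isHermitian
    simpa [Matrix.IsHermitian, Matrix.conjTranspose_eq_transpose_of_trivial] using this
  have hfx : ∀ x : Fin n → ℝ, f x = f σ +
      ((x - σ) ⬝ᵥ (A⁻¹ *ᵥ (x - σ)) + (C *ᵥ (x - σ)) ⬝ᵥ (B⁻¹ *ᵥ (C *ᵥ (x - σ)))) := by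
    intro x
    set y : Fin n → ℝ := x - σ with hy
    have hxa : x - a = y + u := by rw [hy, hu]; abel
    have hxb : C *ᵥ x - b = C *ᵥ y + v := by
      rw [hv, hy, mulVec_sub]; abel
    have cross : y ⬝ᵥ (A⁻¹ *ᵥ u) + (C *ᵥ y) ⬝ᵥ (B⁻¹ *ᵥ v) = 0 := by
      have : (C *ᵥ y) ⬝ᵥ (B⁻¹ *ᵥ v) = y ⬝ᵥ (Cᵀ *ᵥ (B⁻¹ *ᵥ v)) := by
        rw [dotProduct_comm, dotProduct_mulVec, ← mulVec_transpose]
        exact dotProduct_comm _ _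
      rw [this, ← dotProduct_add, key, dotProduct_zero]
    rw [hf]
    simp only
    rw [hxa, hxb, quad_expand A⁻¹ hAsym y u, quad_expand B⁻¹ hBsym (C *ᵥ y) v]
    have hσa : σ - a = u := hu.symm
    have hσb : C *ᵥ σ - b = v := hv.symm
    rw [hσa, hσb]
    linear_combination 2 * cross
  constructor
  · intro x hx
    have hy : x - σ ≠ 0 := sub_ne_zero.mpr hx
    have hpos : 0 < (x - σ) ⬝ᵥ (A⁻¹ *ᵥ (x - σ)) := by
      have := hAinv.dotProduct_mulVec_pos hy
      simpa using this
    have hnn : 0 ≤ (C *ᵥ (x - σ)) ⬝ᵥ (B⁻¹ *ᵥ (C *ᵥ (x - σ))) := by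
      have := hBinv.posSemidef.dotProduct_mulVec_nonneg (C *ᵥ (x - σ))
      simpa using this
    have := hfx x
    linarith
  · rw [hf]
end
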